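/- Suppose N : FinTypeᵒᵖ → Type satisfies the nerve condition, and set G := N(Fin 2). Identify N(Fin 3) with G × G via the bijection (N(φ_0), N(φ_1)). Define multiplication G × G → G as N(ψ) under this identification, where ψ : Fin 2 → Fin 3 is the map 0 ↦ 0, 1 ↦ 2; define e ∈ G as the image of the unique element of N(Fin 1) under N(∇), where ∇ : Fin 2 → Fin 1 is the fold map; and define inversion G → G as N(s), where s : Fin 2 → Fin 2 is the transposition. Then these data make G a group: the multiplication is associative, e is a two-sided identity, and N(s) sends each element to its two-sided inverse. -/

import Mathlib

/-!
Write `y_ij := N(0 ↦ i, 1 ↦ j)(y)` for the edges of `y ∈ N(Fin n)`. Pulling back along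
the triangle `(i, j, k) : Fin 3 → Fin n` shows `y_ij * y_jk = y_ik` for every `y`. Associativity
follows by lifting `(a, b, c)` to `y ∈ N(Fin 4)` and computing `y_03` as `(y_01 y_12) y_23` and as
`y_01 (y_12 y_23)`. A degenerate edge `y_ii` factors through the singleton `N(Fin 1)`, so it is the
unit; applied to `a = a_01` and `N(s) a = a_10` this gives the unit and inverse laws.
-/

open CategoryTheory Opposite

/-- The map `φ_i : Fin 2 → Fin n` (with `n = m + 2`, `0 ≤ i ≤ n − 2`), `0 ↦ i`, `1 ↦ i + 1`,
as a morphism of `FintypeCat`. -/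
def phiMap (m : ℕ) (i : Fin (m + 1)) :
    FintypeCat.of (Fin 2) ⟶ FintypeCat.of (Fin (m + 2)) :=
  FintypeCat.homMk fun j => ⟨i.1 + j.1, by omega⟩

/-- A functor `N : FinTypeᵒᵖ → Type` satisfies the nerve condition if for every `n ≥ 2`
the map `(N(φ_0), …, N(φ_{n−2})) : N(Fin n) → N(Fin 2)^{n−1}` is a bijection and
`N(∅)`, `N(Fin 1)` are singletons. -/
def NerveCond (N : FintypeCat.{0}ᵒᵖ ⥤ Type) : Prop :=
  (∀ m : ℕ, Function.Bijective fun (x : N.obj (op (FintypeCat.of (Fin (m + 2)))))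
      (i : Fin (m + 1)) => N.map (phiMap m i).op x) ∧
  (Nonempty (N.obj (op (FintypeCat.of (Fin 0)))) ∧
    Subsingleton (N.obj (op (FintypeCat.of (Fin 0))))) ∧
  (Nonempty (N.obj (op (FintypeCat.of (Fin 1)))) ∧
    Subsingleton (N.obj (op (FintypeCat.of (Fin 1)))))

/-- `ψ : Fin 2 → Fin 3`, `0 ↦ 0`, `1 ↦ 2`. -/
def psiMap : FintypeCat.of (Fin 2) ⟶ FintypeCat.of (Fin 3) :=
  FintypeCat.homMk fun j => ⟨2 * j.1, by omega⟩

/-- The fold map `∇ : Fin 2 → Fin 1`. -/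
def foldMap : FintypeCat.of (Fin 2) ⟶ FintypeCat.of (Fin 1) :=
  FintypeCat.homMk fun _ => (0 : Fin 1)

/-- The transposition `s : Fin 2 → Fin 2`. -/
def swapMap : FintypeCat.of (Fin 2) ⟶ FintypeCat.of (Fin 2) :=
  FintypeCat.homMk fun j => ⟨1 - j.1, by omega⟩

variable (N : FintypeCat.{0}ᵒᵖ ⥤ Type)

/-- The multiplication on `G := N(Fin 2)`: `N(ψ)` composed with the inverse of the
identification `N(Fin 3) ≅ G × G` given by `(N(φ_0), N(φ_1))`. -/
noncomputable def nerveMul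
    (h : Function.Bijective fun (x : N.obj (op (FintypeCat.of (Fin 3)))) (i : Fin 2) =>
      N.map (phiMap 1 i).op x)
    (a b : N.obj (op (FintypeCat.of (Fin 2)))) :
    N.obj (op (FintypeCat.of (Fin 2))) :=
  N.map psiMap.op ((Equiv.ofBijective _ h).symm ![a, b])

/-- The unit of `G := N(Fin 2)`: the image under `N(∇)` of the unique element
of `N(Fin 1)`. -/
noncomputable def nerveOne (h : Nonempty (N.obj (op (FintypeCat.of (Fin 1))))) :
    N.obj (op (FintypeCat.of (Fin 2))) :=
  N.map foldMap.op h.some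

/-- The inversion on `G := N(Fin 2)`, given by `N(s)`. -/
noncomputable def nerveInv (a : N.obj (op (FintypeCat.of (Fin 2)))) :
    N.obj (op (FintypeCat.of (Fin 2))) :=
  N.map swapMap.op a

def edgeMap {n : ℕ} (i j : Fin n) : FintypeCat.of (Fin 2) ⟶ FintypeCat.of (Fin n) :=
  FintypeCat.homMk ![i, j]

def triangleMap {n : ℕ} (i j k : Fin n) : FintypeCat.of (Fin 3) ⟶ FintypeCat.of (Fin n) :=
  FintypeCat.homMk ![i, j, k]

lemma edgeMap_comp {n m : ℕ} (i j : Fin n) (f : FintypeCat.of (Fin n) ⟶ FintypeCat.of (Fin m)) :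
    edgeMap i j ≫ f = edgeMap (f i) (f j) := by
  ext l; fin_cases l <;> rfl

lemma phiMap_eq_edgeMap (m : ℕ) (i : Fin (m + 1)) : phiMap m i = edgeMap i.castSucc i.succ := by
  ext l; fin_cases l <;> rfl

lemma psiMap_eq_edgeMap : psiMap = edgeMap 0 2 := by
  ext l; fin_cases l <;> rfl

lemma swapMap_eq_edgeMap : swapMap = edgeMap 1 0 := by
  ext l; fin_cases l <;> rfl

lemma edgeMap_zero_one : edgeMap (0 : Fin 2) 1 = 𝟙 _ := by
  ext l; fin_cases l <;> rfl

lemma edgeMap_self {n : ℕ} (i : Fin n) :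
    edgeMap i i = foldMap ≫ FintypeCat.homMk fun _ => i := by
  ext l; fin_cases l <;> rfl

lemma map_edgeMap_comp {n m : ℕ} (f : FintypeCat.of (Fin n) ⟶ FintypeCat.of (Fin m))
    (i j : Fin n) (y : N.obj (op (FintypeCat.of (Fin m)))) :
    N.map (edgeMap i j).op (N.map f.op y) = N.map (edgeMap (f i) (f j)).op y := by
  rw [← Functor.map_comp_apply, ← op_comp, edgeMap_comp]

lemma map_edgeMap_zero_one (a : N.obj (op (FintypeCat.of (Fin 2)))) :
    N.map (edgeMap 0 1).op a = a := by
  rw [edgeMap_zero_one, op_id, Functor.map_id_apply]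

lemma map_edgeMap_one_zero (a : N.obj (op (FintypeCat.of (Fin 2)))) :
    N.map (edgeMap 1 0).op a = nerveInv N a := by
  rw [← swapMap_eq_edgeMap, nerveInv]

lemma map_edgeMap_self (hs : Subsingleton (N.obj (op (FintypeCat.of (Fin 1)))))
    (hne : Nonempty (N.obj (op (FintypeCat.of (Fin 1))))) {n : ℕ} (i : Fin n)
    (y : N.obj (op (FintypeCat.of (Fin n)))) :
    N.map (edgeMap i i).op y = nerveOne N hne := by
  rw [edgeMap_self, op_comp, Functor.map_comp_apply, nerveOne,
    Subsingleton.elim (N.map _ y) hne.some]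

section Multiplication

variable {N} (h : Function.Bijective fun (x : N.obj (op (FintypeCat.of (Fin 3)))) (i : Fin 2) =>
      N.map (phiMap 1 i).op x)

/-- The preimage of the pair of short edges of `y` under `(N(φ_0), N(φ_1))` is the triangle
`N(i, j, k)(y)`, whose `ψ`-edge is the long edge. -/
lemma nerveMul_map_edgeMap {n : ℕ} (i j k : Fin n) (y : N.obj (op (FintypeCat.of (Fin n)))) :
    nerveMul N h (N.map (edgeMap i j).op y) (N.map (edgeMap j k).op y)
      = N.map (edgeMap i k).op y := by
  set x := N.map (triangleMap i j k).op y
  have hx : (Equiv.ofBijective _ h).symm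
      ![N.map (edgeMap i j).op y, N.map (edgeMap j k).op y] = x := by
    rw [Equiv.symm_apply_eq]
    funext l
    fin_cases l <;>
      simp only [Equiv.ofBijective_apply, x, phiMap_eq_edgeMap, map_edgeMap_comp] <;> rfl
  rw [nerveMul, hx, psiMap_eq_edgeMap, map_edgeMap_comp]
  rfl

lemma nerveMul_assoc
    (h' : Function.Surjective fun (x : N.obj (op (FintypeCat.of (Fin 4)))) (i : Fin 3) =>
      N.map (phiMap 2 i).op x)
    (a b c : N.obj (op (FintypeCat.of (Fin 2)))) :
    nerveMul N h (nerveMul N h a b) c = nerveMul N h a (nerveMul N h b c) := by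
  obtain ⟨y, hy⟩ := h' ![a, b, c]
  have edge (l : Fin 3) : N.map (edgeMap l.castSucc l.succ).op y = ![a, b, c] l := by
    rw [← phiMap_eq_edgeMap]; exact congrFun hy l
  have ha : N.map (edgeMap (0 : Fin 4) 1).op y = a := edge 0
  have hb : N.map (edgeMap (1 : Fin 4) 2).op y = b := edge 1
  have hc : N.map (edgeMap (2 : Fin 4) 3).op y = c := edge 2
  calc nerveMul N h (nerveMul N h a b) c
      = nerveMul N h (N.map (edgeMap 0 2).op y) (N.map (edgeMap 2 3).op y) := by
        rw [← nerveMul_map_edgeMap h 0 1 2, ha, hb, hc]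
    _ = nerveMul N h (N.map (edgeMap 0 1).op y) (N.map (edgeMap 1 3).op y) := by
        rw [nerveMul_map_edgeMap, nerveMul_map_edgeMap]
    _ = nerveMul N h a (nerveMul N h b c) := by
        rw [← nerveMul_map_edgeMap h 1 2 3, ha, hb, hc]

lemma one_nerveMul (hs : Subsingleton (N.obj (op (FintypeCat.of (Fin 1)))))
    (hne : Nonempty (N.obj (op (FintypeCat.of (Fin 1)))))
    (a : N.obj (op (FintypeCat.of (Fin 2)))) :
    nerveMul N h (nerveOne N hne) a = a := by
  simpa only [map_edgeMap_self N hs hne, map_edgeMap_zero_one] using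
    nerveMul_map_edgeMap h (0 : Fin 2) 0 1 a

lemma nerveMul_one (hs : Subsingleton (N.obj (op (FintypeCat.of (Fin 1)))))
    (hne : Nonempty (N.obj (op (FintypeCat.of (Fin 1)))))
    (a : N.obj (op (FintypeCat.of (Fin 2)))) :
    nerveMul N h a (nerveOne N hne) = a := by
  simpa only [map_edgeMap_self N hs hne, map_edgeMap_zero_one] using
    nerveMul_map_edgeMap h (0 : Fin 2) 1 1 a

lemma nerveInv_nerveMul (hs : Subsingleton (N.obj (op (FintypeCat.of (Fin 1)))))
    (hne : Nonempty (N.obj (op (FintypeCat.of (Fin 1)))))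
    (a : N.obj (op (FintypeCat.of (Fin 2)))) :
    nerveMul N h (nerveInv N a) a = nerveOne N hne := by
  simpa only [map_edgeMap_self N hs hne, map_edgeMap_zero_one, map_edgeMap_one_zero] using
    nerveMul_map_edgeMap h (1 : Fin 2) 0 1 a

lemma nerveMul_nerveInv (hs : Subsingleton (N.obj (op (FintypeCat.of (Fin 1)))))
    (hne : Nonempty (N.obj (op (FintypeCat.of (Fin 1)))))
    (a : N.obj (op (FintypeCat.of (Fin 2)))) :
    nerveMul N h a (nerveInv N a) = nerveOne N hne := by
  simpa only [map_edgeMap_self N hs hne, map_edgeMap_zero_one, map_edgeMap_one_zero] using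
    nerveMul_map_edgeMap h (0 : Fin 2) 1 0 a

end Multiplication

theorem nerve_gives_group (hN : NerveCond N) :
    (∀ a b c, nerveMul N (hN.1 1) (nerveMul N (hN.1 1) a b) c
        = nerveMul N (hN.1 1) a (nerveMul N (hN.1 1) b c)) ∧
    (∀ a, nerveMul N (hN.1 1) (nerveOne N hN.2.2.1) a = a ∧
      nerveMul N (hN.1 1) a (nerveOne N hN.2.2.1) = a) ∧
    (∀ a, nerveMul N (hN.1 1) (nerveInv N a) a = nerveOne N hN.2.2.1 ∧
      nerveMul N (hN.1 1) a (nerveInv N a) = nerveOne N hN.2.2.1) := by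
  obtain ⟨hbij, -, hne, hs⟩ := hN
  exact ⟨nerveMul_assoc (hbij 1) (hbij 2).2,
    fun a => ⟨one_nerveMul (hbij 1) hs hne a, nerveMul_one (hbij 1) hs hne a⟩,
    fun a => ⟨nerveInv_nerveMul (hbij 1) hs hne a, nerveMul_nerveInv (hbij 1) hs hne a⟩⟩
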